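/- Let k ≥ 1, let A be a unital C*-algebra, and let p : Fin k → Fin k → A be a family of projections such that ∑_b p a b = 1 for every a, and p a b · p a' b = 0 whenever a ≠ a'. Then ∑_a p a b = 1 for every b ∈ Fin k. -/

import Mathlib

/-! Each column sum `q b = ∑ a, p a b` is a sum of mutually orthogonal projections, hence a
projection, so `1 - q b ≥ 0`. Summing the rows gives `∑ b, q b = k`, so `∑ b, (1 - q b) = 0` is
a vanishing sum of positive elements and every `1 - q b` vanishes. -/

open Finset

theorem IsStarProjection.sum {R ι : Type*} [Semiring R] [StarRing R] {e : ι → R}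
    (he : ∀ i, IsStarProjection (e i)) (horth : Pairwise fun i j ↦ e i * e j = 0)
    (s : Finset ι) : IsStarProjection (∑ i ∈ s, e i) where
  isIdempotentElem :=
    OrthogonalIdempotents.isIdempotentElem_sum ⟨fun i ↦ (he i).isIdempotentElem, horth⟩
  isSelfAdjoint := isSelfAdjoint_sum s fun i _ ↦ (he i).isSelfAdjoint

theorem IsStarProjection.eq_one_of_sum_eq_card {R ι : Type*} [Ring R] [PartialOrder R]
    [StarRing R] [StarOrderedRing R] [Fintype ι] {q : ι → R} (hq : ∀ i, IsStarProjection (q i))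
    (hsum : ∑ i, q i = Fintype.card ι) (i : ι) : q i = 1 := by
  have hzero : ∑ j, (1 - q j) = 0 := by
    simp [sum_sub_distrib, hsum]
  have hnonneg : ∀ j ∈ univ, 0 ≤ 1 - q j := fun j _ ↦ (hq j).one_sub.nonneg
  exact (sub_eq_zero.mp ((sum_eq_zero_iff_of_nonneg hnonneg).mp hzero i (mem_univ i))).symm

theorem stmt2_general {A : Type*} [CStarAlgebra A] (k : ℕ)
    (p : Fin k → Fin k → A)
    (hproj : ∀ a b, star (p a b) = p a b ∧ p a b * p a b = p a b)
    (hsum : ∀ a : Fin k, ∑ b : Fin k, p a b = 1)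
    (horth : ∀ (a a' : Fin k) (b : Fin k), a ≠ a' → p a b * p a' b = 0) :
    ∀ b : Fin k, ∑ a : Fin k, p a b = 1 := by
  -- `CStarAlgebra` carries no order instance; positivity is measured in the spectral order.
  let _ := CStarAlgebra.spectralOrder A
  have _ := CStarAlgebra.spectralOrderedRing A
  have hp : ∀ a b, IsStarProjection (p a b) := fun a b ↦ ⟨(hproj a b).2, (hproj a b).1⟩
  have hcol : ∀ b, IsStarProjection (∑ a, p a b) := fun b ↦
    IsStarProjection.sum (fun a ↦ hp a b) (fun a a' hne ↦ horth a a' b hne) univ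
  have htotal : ∑ b, ∑ a, p a b = Fintype.card (Fin k) := by
    rw [sum_comm]
    simp [hsum]
  exact IsStarProjection.eq_one_of_sum_eq_card hcol htotal

/-- In a unital C*-algebra, if `p : Fin k → Fin k → A` (`k ≥ 1`) is a
family of projections whose rows sum to `1` and whose columns are orthogonal
(`p a b * p a' b = 0` for `a ≠ a'`), then each column also sums to `1`. -/
theorem stmt2 {A : Type*} [CStarAlgebra A] (k : ℕ) (hk : 1 ≤ k)
    (p : Fin k → Fin k → A)
    (hproj : ∀ a b, star (p a b) = p a b ∧ p a b * p a b = p a b)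
    (hsum : ∀ a : Fin k, ∑ b : Fin k, p a b = 1)
    (horth : ∀ (a a' : Fin k) (b : Fin k), a ≠ a' → p a b * p a' b = 0) :
    ∀ b : Fin k, ∑ a : Fin k, p a b = 1 :=
  stmt2_general k p hproj hsum horth
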